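/- arXiv:2012.06924 — 2 statements merged into one kernel-verified Lean document; each statement's English description precedes it below -/
import Mathlib

section
/- Let A_0, A_1, …, A_L ∈ ℝ^{n×n} be entrywise nonnegative matrices, let 𝒜 be the associated delay block matrix, and suppose α := ρ(𝒜) > 0. Then ρ(∑_{ℓ=0}^L α^{−ℓ} A_ℓ) = α. -/
open Matrix BigOperators

/-- The spectral radius of a real square matrix: the maximum modulus of its
complex eigenvalues. -/
noncomputable def specRad {m : Type*} [Fintype m] [DecidableEq m]
    (A : Matrix m m ℝ) : ℝ :=
  (spectralRadius ℂ (A.map (algebraMap ℝ ℂ))).toReal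

/-- The delay block matrix associated to matrices `A 0, …, A L`: first block row
`(A 0  A 1 ⋯ A L)`, identity matrices on the block subdiagonal, zeros elsewhere. -/
def delayBlock {n L : ℕ} (A : Fin (L + 1) → Matrix (Fin n) (Fin n) ℝ) :
    Matrix (Fin n × Fin (L + 1)) (Fin n × Fin (L + 1)) ℝ :=
  fun p q =>
    if (p.2 : ℕ) = 0 then A q.2 p.1 q.1
    else if p.1 = q.1 ∧ (q.2 : ℕ) + 1 = (p.2 : ℕ) then 1 else 0


set_option linter.unusedSectionVars false
set_option maxHeartbeats 1000000

open Filter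

attribute [local instance] Matrix.linftyOpNormedRing Matrix.linftyOpNormedAlgebra

section helpers

variable {m : Type*} [Fintype m] [DecidableEq m]

lemma mulVec_map_coe (N : Matrix m m ℝ) (u : m → ℝ) :
    (N.map (algebraMap ℝ ℂ)) *ᵥ (fun i => (u i : ℂ)) = fun i => ((N *ᵥ u) i : ℂ) := by
  funext i
  simp [Matrix.mulVec, dotProduct]

lemma eig_of_mem_spectrum {M : Matrix m m ℂ} {μ : ℂ} (h : μ ∈ spectrum ℂ M) :
    ∃ v, v ≠ 0 ∧ M *ᵥ v = μ • v := by
  rw [spectrum.mem_iff] at h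
  rw [Matrix.isUnit_iff_isUnit_det, isUnit_iff_ne_zero, ne_eq, not_not] at h
  obtain ⟨v, hv0, hv⟩ := (Matrix.exists_mulVec_eq_zero_iff).mpr h
  refine ⟨v, hv0, ?_⟩
  rw [Matrix.sub_mulVec, Algebra.algebraMap_eq_smul_one, Matrix.smul_mulVec,
    Matrix.one_mulVec, sub_eq_zero] at hv
  exact hv.symm

lemma specRad_exists_eig [Nonempty m] (M : Matrix m m ℝ) :
    ∃ (μ : ℂ) (v : m → ℂ), v ≠ 0 ∧ (M.map (algebraMap ℝ ℂ)) *ᵥ v = μ • v ∧ ‖μ‖ = specRad M := by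
  obtain ⟨μ, hmem, hnorm⟩ := spectrum.exists_nnnorm_eq_spectralRadius (M.map (algebraMap ℝ ℂ))
  obtain ⟨v, hv0, hv⟩ := eig_of_mem_spectrum hmem
  refine ⟨μ, v, hv0, hv, ?_⟩
  have := congrArg ENNReal.toReal hnorm
  simpa [specRad] using this

lemma specRad_ne_top [Nonempty m] (M : Matrix m m ℝ) :
    spectralRadius ℂ (M.map (algebraMap ℝ ℂ)) ≠ ⊤ := by
  obtain ⟨μ, _, hnorm⟩ := spectrum.exists_nnnorm_eq_spectralRadius (M.map (algebraMap ℝ ℂ))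
  exact hnorm ▸ ENNReal.coe_ne_top

/-- sub-invariance: if `M *ᵥ u ≥ s • u` for a nonzero nonneg `u` and nonneg `M`,
then `s ≤ specRad M`. -/
lemma le_specRad_of_subinvariant [Nonempty m] (M : Matrix m m ℝ)
    (hM : ∀ i j, 0 ≤ M i j) {u : m → ℝ} (hu : ∀ i, 0 ≤ u i) (hu0 : u ≠ 0)
    {s : ℝ} (hs : 0 ≤ s) (hsu : ∀ i, s * u i ≤ (M *ᵥ u) i) : s ≤ specRad M := by
  by_contra hcon
  push_neg at hcon
  -- s > specRad M ≥ 0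
  have hρ0 : 0 ≤ specRad M := ENNReal.toReal_nonneg
  have hspos : 0 < s := lt_of_le_of_lt hρ0 hcon
  set θ : ℝ := (specRad M + s) / 2 with hθ
  have hθρ : specRad M < θ := by rw [hθ]; linarith
  have hθs : θ < s := by rw [hθ]; linarith
  have hθpos : 0 < θ := by linarith
  clear_value θ
  -- positivity of powers of M on u
  have hMk : ∀ (k : ℕ) (i : m), s ^ k * u i ≤ ((M ^ k) *ᵥ u) i := by
    intro k
    induction k with
    | zero => intro i; simp [Matrix.one_mulVec]
    | succ k ih =>
      intro i
      have h1 : (M ^ (k+1)) *ᵥ u = M *ᵥ ((M ^ k) *ᵥ u) := by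
        rw [Matrix.mulVec_mulVec, ← pow_succ']
      rw [h1]
      have h2 : ∑ j, M i j * (s ^ k * u j) ≤ ∑ j, M i j * ((M ^ k *ᵥ u) j) :=
        Finset.sum_le_sum fun j _ => mul_le_mul_of_nonneg_left (ih j) (hM i j)
      calc s ^ (k+1) * u i = s ^ k * (s * u i) := by ring
        _ ≤ s ^ k * (M *ᵥ u) i := by
            exact mul_le_mul_of_nonneg_left (hsu i) (pow_nonneg hs k)
        _ = ∑ j, M i j * (s ^ k * u j) := by
            simp only [Matrix.mulVec, dotProduct, Finset.mul_sum]
            exact Finset.sum_congr rfl fun x _ => by ring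
        _ ≤ ∑ j, M i j * ((M ^ k *ᵥ u) j) := h2
        _ = (M *ᵥ (M ^ k *ᵥ u)) i := by simp [Matrix.mulVec, dotProduct]
  -- pick a coordinate where u is positive
  obtain ⟨i₀, hi₀⟩ : ∃ i, u i ≠ 0 := Function.ne_iff.mp hu0
  have hc : 0 < u i₀ := lt_of_le_of_ne (hu i₀) (Ne.symm hi₀)
  set M' := M.map (algebraMap ℝ ℂ) with hM'
  set uc : m → ℂ := fun i => (u i : ℂ) with huc
  have hT : 0 < ‖uc‖ := by
    rw [norm_pos_iff]
    intro h
    apply hi₀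
    have := congrFun h i₀
    simpa [huc] using this
  -- norm lower bound
  have hnormk : ∀ k : ℕ, s ^ k * u i₀ ≤ ‖M' ^ k‖ * ‖uc‖ := by
    intro k
    have h1 : (M' ^ k) *ᵥ uc = fun i => (((M ^ k) *ᵥ u) i : ℂ) := by
      have hpow : (M.map (algebraMap ℝ ℂ)) ^ k = (M ^ k).map (algebraMap ℝ ℂ) := by
        simpa [RingHom.mapMatrix_apply] using (map_pow ((algebraMap ℝ ℂ).mapMatrix) M k).symm
      rw [hM', hpow]
      exact mulVec_map_coe _ _
    have h2 : ‖((M' ^ k) *ᵥ uc) i₀‖ ≤ ‖(M' ^ k) *ᵥ uc‖ := norm_le_pi_norm _ i₀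
    have h3 : ‖(M' ^ k) *ᵥ uc‖ ≤ ‖M' ^ k‖ * ‖uc‖ := Matrix.linfty_opNorm_mulVec _ _
    have h4 : s ^ k * u i₀ ≤ ‖((M' ^ k) *ᵥ uc) i₀‖ := by
      rw [h1]
      simp only [Complex.norm_real]
      exact le_trans (hMk k i₀) (le_abs_self _)
    linarith
  -- Gelfand: eventually ‖M'^k‖ ≤ θ^k
  have hgel := spectrum.pow_nnnorm_pow_one_div_tendsto_nhds_spectralRadius M'
  have hρθ : spectralRadius ℂ M' < ENNReal.ofReal θ := by
    have hne := specRad_ne_top M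
    rw [← ENNReal.ofReal_toReal hne]
    exact ENNReal.ofReal_lt_ofReal_iff hθpos |>.mpr hθρ
  have hev : ∀ᶠ k : ℕ in atTop, (‖M' ^ k‖₊ : ENNReal) ^ (1 / (k:ℝ)) < ENNReal.ofReal θ :=
    hgel.eventually_lt_const hρθ
  have hev2 : ∀ᶠ k : ℕ in atTop, ‖M' ^ k‖ ≤ θ ^ k := by
    filter_upwards [hev, eventually_ge_atTop 1] with k hk hk1
    have hk0 : (k:ℝ) ≠ 0 := by positivity
    have h5 : (‖M' ^ k‖₊ : ENNReal) ≤ (ENNReal.ofReal θ) ^ k := by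
      have h := ENNReal.rpow_le_rpow hk.le (by positivity : (0:ℝ) ≤ (k:ℝ))
      rw [← ENNReal.rpow_mul, one_div, inv_mul_cancel₀ hk0, ENNReal.rpow_one,
        ENNReal.rpow_natCast] at h
      exact h
    rw [← ENNReal.ofReal_pow hθpos.le] at h5
    have := ENNReal.toReal_mono (by exact ENNReal.ofReal_ne_top) h5
    rw [ENNReal.coe_toReal, ENNReal.toReal_ofReal (by positivity)] at this
    exact_mod_cast this
  -- eventually (s/θ)^k is big
  have hratio : 1 < s / θ := (one_lt_div hθpos).mpr hθs
  have hbig : Tendsto (fun k : ℕ => (s/θ) ^ k) atTop atTop :=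
    tendsto_pow_atTop_atTop_of_one_lt hratio
  have hev3 : ∀ᶠ k : ℕ in atTop, ‖uc‖ / (u i₀) < (s/θ)^k :=
    hbig.eventually_gt_atTop _
  obtain ⟨k, hk2, hk3⟩ := (hev2.and hev3).exists
  -- contradiction
  have h6 : s ^ k * u i₀ ≤ θ ^ k * ‖uc‖ := le_trans (hnormk k)
    (mul_le_mul_of_nonneg_right hk2 (norm_nonneg _))
  rw [div_pow, div_lt_div_iff₀ hc (pow_pos hθpos k)] at hk3
  linarith

end helpers

section delaycomp

variable {n L : ℕ} {R : Type*} [CommRing R]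

lemma delay_mulVec_zero (f : ℝ →+* R) (A : Fin (L + 1) → Matrix (Fin n) (Fin n) ℝ)
    (w : Fin n × Fin (L + 1) → R) (i : Fin n) (ℓ : Fin (L + 1)) (hℓ : (ℓ : ℕ) = 0) :
    (((delayBlock A).map f) *ᵥ w) (i, ℓ) =
      ∑ k : Fin (L + 1), ∑ j : Fin n, f (A k i j) * w (j, k) := by
  simp only [Matrix.mulVec, dotProduct, Fintype.sum_prod_type, delayBlock,
    Matrix.map_apply, hℓ, if_pos]
  exact Finset.sum_comm

lemma delay_mulVec_succ (f : ℝ →+* R) (A : Fin (L + 1) → Matrix (Fin n) (Fin n) ℝ)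
    (w : Fin n × Fin (L + 1) → R) (i : Fin n) (ℓ : Fin (L + 1)) {d : ℕ}
    (hℓ : (ℓ : ℕ) = d + 1) (hd : d < L + 1) :
    (((delayBlock A).map f) *ᵥ w) (i, ℓ) = w (i, ⟨d, hd⟩) := by
  rw [Matrix.mulVec, dotProduct]
  rw [Finset.sum_eq_single ((i, (⟨d, hd⟩ : Fin (L + 1))))]
  · simp [delayBlock, hℓ]
  · rintro ⟨j, k⟩ - hne
    simp only [delayBlock, Matrix.map_apply, hℓ]
    have h1 : (d + 1 : ℕ) ≠ 0 := Nat.succ_ne_zero d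
    rw [if_neg h1]
    rcases eq_or_ne i j with rfl | hij
    · rcases eq_or_ne (k : ℕ) d with hk | hk
      · exfalso; apply hne; ext <;> simp [hk]
      · rw [if_neg (by simp [hk, fun h => hk (Nat.succ_injective h)]), map_zero, zero_mul]
    · rw [if_neg (by tauto), map_zero, zero_mul]
  · simp

lemma delay_mulVec_zero' (A : Fin (L + 1) → Matrix (Fin n) (Fin n) ℝ)
    (w : Fin n × Fin (L + 1) → ℝ) (i : Fin n) (ℓ : Fin (L + 1)) (hℓ : (ℓ : ℕ) = 0) :
    ((delayBlock A) *ᵥ w) (i, ℓ) =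
      ∑ k : Fin (L + 1), ∑ j : Fin n, A k i j * w (j, k) := by
  simpa using delay_mulVec_zero (RingHom.id ℝ) A w i ℓ hℓ

lemma delay_mulVec_succ' (A : Fin (L + 1) → Matrix (Fin n) (Fin n) ℝ)
    (w : Fin n × Fin (L + 1) → ℝ) (i : Fin n) (ℓ : Fin (L + 1)) {d : ℕ}
    (hℓ : (ℓ : ℕ) = d + 1) (hd : d < L + 1) :
    ((delayBlock A) *ᵥ w) (i, ℓ) = w (i, ⟨d, hd⟩) := by
  simpa using delay_mulVec_succ (RingHom.id ℝ) A w i ℓ hℓ hd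

lemma delayBlock_nonneg (A : Fin (L + 1) → Matrix (Fin n) (Fin n) ℝ)
    (hA : ∀ ℓ i j, 0 ≤ A ℓ i j) : ∀ p q, 0 ≤ delayBlock A p q := by
  intro p q
  unfold delayBlock
  split_ifs
  · exact hA _ _ _
  · exact zero_le_one
  · exact le_refl 0

end delaycomp


theorem stmt2 {n L : ℕ}
    (A : Fin (L + 1) → Matrix (Fin n) (Fin n) ℝ)
    (hA : ∀ ℓ i j, 0 ≤ A ℓ i j)
    (hα : 0 < specRad (delayBlock A)) :
    specRad (∑ ℓ : Fin (L + 1), ((specRad (delayBlock A)) ^ (ℓ : ℕ))⁻¹ • A ℓ) =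
      specRad (delayBlock A) := by
  classical
  rcases Nat.eq_zero_or_pos n with hn0 | hn0
  · exfalso
    subst hn0
    have h0 : specRad (delayBlock A) = 0 := by
      unfold specRad
      rw [spectrum.SpectralRadius.of_subsingleton]
      rfl
    rw [h0] at hα; exact lt_irrefl 0 hα
  haveI : Nonempty (Fin n) := ⟨⟨0, hn0⟩⟩
  set α := specRad (delayBlock A) with hαdef
  set B := ∑ ℓ : Fin (L + 1), ((α : ℝ) ^ (ℓ : ℕ))⁻¹ • A ℓ with hBdef
  have hα0 : 0 < α := hα
  have hBentry : ∀ i j, B i j = ∑ ℓ : Fin (L + 1), (α ^ (ℓ : ℕ))⁻¹ * A ℓ i j := by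
    intro i j; rw [hBdef]; simp [Matrix.sum_apply]
  have hBnn : ∀ i j, 0 ≤ B i j := by
    intro i j; rw [hBentry]
    exact Finset.sum_nonneg fun ℓ _ => mul_nonneg (by positivity) (hA ℓ i j)
  have hBmul : ∀ (u : Fin n → ℝ) (i : Fin n),
      (B *ᵥ u) i = ∑ ℓ : Fin (L + 1), (α ^ (ℓ : ℕ))⁻¹ * ∑ j, A ℓ i j * u j := by
    intro u i
    calc (B *ᵥ u) i = ∑ j, (∑ ℓ : Fin (L + 1), (α ^ (ℓ : ℕ))⁻¹ * A ℓ i j) * u j := by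
          simp [Matrix.mulVec, dotProduct, hBentry]
      _ = ∑ j, ∑ ℓ : Fin (L + 1), (α ^ (ℓ : ℕ))⁻¹ * (A ℓ i j * u j) := by
          refine Finset.sum_congr rfl fun j _ => ?_
          rw [Finset.sum_mul]
          exact Finset.sum_congr rfl fun ℓ _ => by ring
      _ = ∑ ℓ : Fin (L + 1), ∑ j, (α ^ (ℓ : ℕ))⁻¹ * (A ℓ i j * u j) := Finset.sum_comm
      _ = ∑ ℓ : Fin (L + 1), (α ^ (ℓ : ℕ))⁻¹ * ∑ j, A ℓ i j * u j := by
          simp [Finset.mul_sum]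
  -- Step A : α ≤ specRad B
  obtain ⟨lam, v, hv0, hv, hlamnorm⟩ := specRad_exists_eig (delayBlock A)
  have hlam0 : lam ≠ 0 := by
    intro h; rw [h, norm_zero] at hlamnorm; rw [← hαdef] at hlamnorm; linarith
  have hrow : ∀ p, (((delayBlock A).map (algebraMap ℝ ℂ)) *ᵥ v) p = lam * v p := by
    intro p; rw [hv]; rfl
  have hstep : ∀ (d : ℕ) (hd : d < L + 1) (i : Fin n),
      v (i, (0 : Fin (L + 1))) = lam ^ d * v (i, ⟨d, hd⟩) := by
    intro d
    induction d with
    | zero =>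
      intro hd i
      have : (⟨0, hd⟩ : Fin (L + 1)) = 0 := rfl
      rw [this, pow_zero, one_mul]
    | succ d ih =>
      intro hd i
      have hd' : d < L + 1 := Nat.lt_of_succ_lt hd
      have h1 := hrow (i, (⟨d + 1, hd⟩ : Fin (L + 1)))
      rw [delay_mulVec_succ (algebraMap ℝ ℂ) A v i _ rfl hd'] at h1
      rw [ih hd' i, h1]; ring
  set u : Fin n → ℝ := fun j => ‖v (j, (0 : Fin (L + 1)))‖ with hudef
  have hun : ∀ j, 0 ≤ u j := fun j => norm_nonneg _
  have hu0 : u ≠ 0 := by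
    obtain ⟨p, hp⟩ := Function.ne_iff.mp hv0
    have hst := hstep (p.2 : ℕ) p.2.isLt p.1
    rw [Fin.eta] at hst
    intro h
    have h2 : u p.1 = 0 := congrFun h p.1
    simp only [hudef, Pi.zero_apply, norm_eq_zero] at h2
    rw [h2] at hst
    rcases mul_eq_zero.mp hst.symm with h3 | h3
    · exact hlam0 (pow_eq_zero_iff'.mp h3).1
    · rw [Prod.mk.eta] at h3; exact hp h3
  have hnormv : ∀ (k : Fin (L + 1)) (j : Fin n), ‖v (j, k)‖ = (α ^ (k : ℕ))⁻¹ * u j := by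
    intro k j
    have hst := hstep (k : ℕ) k.isLt j
    rw [Fin.eta] at hst
    have h2 : u j = α ^ (k : ℕ) * ‖v (j, k)‖ := by
      rw [hudef]; dsimp only; rw [hst, norm_mul, norm_pow, hlamnorm]
    rw [h2]
    have hαk : (0:ℝ) < α ^ (k : ℕ) := pow_pos hα0 _
    field_simp
  have hkey : ∀ i, α * u i ≤ (B *ᵥ u) i := by
    intro i
    have h1 := hrow (i, (0 : Fin (L + 1)))
    rw [delay_mulVec_zero (algebraMap ℝ ℂ) A v i 0 rfl] at h1
    have h2 : α * u i = ‖∑ k : Fin (L + 1), ∑ j, (algebraMap ℝ ℂ) (A k i j) * v (j, k)‖ := by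
      rw [h1, norm_mul, hlamnorm]
    rw [h2, hBmul]
    refine le_trans (norm_sum_le _ _) (Finset.sum_le_sum fun k _ => ?_)
    refine le_trans (norm_sum_le _ _) ?_
    rw [Finset.mul_sum]
    refine Finset.sum_le_sum fun j _ => ?_
    rw [norm_mul, hnormv k j]
    have h3 : ‖(algebraMap ℝ ℂ) (A k i j)‖ = A k i j := by
      rw [Complex.coe_algebraMap, Complex.norm_real, Real.norm_eq_abs, abs_of_nonneg (hA k i j)]
    rw [h3]
    apply le_of_eq; ring
  have hαβ : α ≤ specRad B := le_specRad_of_subinvariant B hBnn hun hu0 hα0.le hkey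
  -- Step B : specRad B ≤ α, by contradiction
  by_contra hne
  have hcon : α < specRad B := lt_of_le_of_ne hαβ (Ne.symm hne)
  set β := specRad B with hβdef
  obtain ⟨μ, x, hx0, hx, hμ⟩ := specRad_exists_eig B
  set u' : Fin n → ℝ := fun j => ‖x j‖ with hu'def
  have hu'n : ∀ j, 0 ≤ u' j := fun j => norm_nonneg _
  have hu'0 : u' ≠ 0 := by
    obtain ⟨j, hj⟩ := Function.ne_iff.mp hx0
    intro h
    have h2 := congrFun h j
    simp only [hu'def, Pi.zero_apply, norm_eq_zero] at h2
    exact hj h2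
  have hsubB : ∀ i, β * u' i ≤ (B *ᵥ u') i := by
    intro i
    have h1 : ((B.map (algebraMap ℝ ℂ)) *ᵥ x) i = μ * x i := by rw [hx]; rfl
    have h2 : β * u' i = ‖∑ j, (algebraMap ℝ ℂ) (B i j) * x j‖ := by
      have h4 : (B.map (algebraMap ℝ ℂ) *ᵥ x) i = ∑ j, (algebraMap ℝ ℂ) (B i j) * x j := by
        simp [Matrix.mulVec, dotProduct]
      rw [← h4, h1, norm_mul, hμ, hβdef, hu'def]
    rw [h2]
    have h3 : (B *ᵥ u') i = ∑ j, B i j * u' j := by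
      simp [Matrix.mulVec, dotProduct]
    rw [h3]
    refine le_trans (norm_sum_le _ _) (Finset.sum_le_sum fun j _ => ?_)
    rw [norm_mul]
    apply le_of_eq
    rw [Complex.coe_algebraMap, Complex.norm_real, Real.norm_eq_abs, abs_of_nonneg (hBnn i j)]
  have hβ0 : 0 < β := lt_trans hα0 hcon
  have hprod : 0 < α ^ L * β := by positivity
  set s : ℝ := (α ^ L * β) ^ ((L : ℝ) + 1)⁻¹ with hsdef
  have hs0 : 0 < s := Real.rpow_pos_of_pos hprod _
  have hspow : s ^ (L + 1) = α ^ L * β := by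
    rw [hsdef, ← Real.rpow_natCast ((α ^ L * β) ^ ((L : ℝ) + 1)⁻¹) (L + 1),
      ← Real.rpow_mul hprod.le]
    have hL1 : ((L : ℝ) + 1) ≠ 0 := by positivity
    rw [show (((L + 1 : ℕ) : ℝ)) = (L : ℝ) + 1 by push_cast; ring,
      inv_mul_cancel₀ hL1, Real.rpow_one]
  have hαs : α < s := by
    have h4 : α ^ (L + 1) < s ^ (L + 1) := by
      rw [hspow, pow_succ]
      exact mul_lt_mul_of_pos_left hcon (pow_pos hα0 L)
    exact lt_of_pow_lt_pow_left₀ (L + 1) hs0.le h4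
  set w : Fin n × Fin (L + 1) → ℝ := fun p => (s ^ (p.2 : ℕ))⁻¹ * u' p.1 with hwdef
  have hwn : ∀ p, 0 ≤ w p := fun p => mul_nonneg (by positivity) (hu'n _)
  have hw0 : w ≠ 0 := by
    obtain ⟨j, hj⟩ := Function.ne_iff.mp hu'0
    intro h
    have h2 := congrFun h (j, (0 : Fin (L + 1)))
    rw [hwdef] at h2
    simp at h2
    exact hj h2
  have hsubA : ∀ p, s * w p ≤ ((delayBlock A) *ᵥ w) p := by
    rintro ⟨i, ℓ⟩
    rcases Nat.eq_zero_or_eq_succ_pred (ℓ : ℕ) with hc0 | hcs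
    · rw [delay_mulVec_zero' A w i ℓ hc0]
      have hcoefkey : ∀ k : Fin (L + 1),
          (α / s) ^ L * ((α ^ (k : ℕ))⁻¹ * ∑ j, A k i j * u' j) ≤ ∑ j, A k i j * w (j, k) := by
        intro k
        rw [Finset.mul_sum, Finset.mul_sum]
        refine Finset.sum_le_sum fun j _ => ?_
        have hcoef : (α / s) ^ L * (α ^ (k : ℕ))⁻¹ ≤ (s ^ (k : ℕ))⁻¹ := by
          have h5 : (α / s) ^ L ≤ (α / s) ^ (k : ℕ) :=
            pow_le_pow_of_le_one (by positivity)
              (le_of_lt ((div_lt_one hs0).mpr hαs)) (Nat.le_of_lt_succ k.isLt)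
          calc (α / s) ^ L * (α ^ (k : ℕ))⁻¹
              ≤ (α / s) ^ (k : ℕ) * (α ^ (k : ℕ))⁻¹ :=
                mul_le_mul_of_nonneg_right h5 (by positivity)
            _ = (s ^ (k : ℕ))⁻¹ := by
                rw [div_pow]
                field_simp
        calc (α / s) ^ L * ((α ^ (k : ℕ))⁻¹ * (A k i j * u' j))
            = ((α / s) ^ L * (α ^ (k : ℕ))⁻¹) * (A k i j * u' j) := by ring
          _ ≤ (s ^ (k : ℕ))⁻¹ * (A k i j * u' j) :=
              mul_le_mul_of_nonneg_right hcoef (mul_nonneg (hA k i j) (hu'n j))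
          _ = A k i j * w (j, k) := by rw [hwdef]; ring
      have h6 : (α / s) ^ L * (B *ᵥ u') i ≤ ∑ k : Fin (L + 1), ∑ j, A k i j * w (j, k) := by
        rw [hBmul u' i, Finset.mul_sum]
        exact Finset.sum_le_sum fun k _ => hcoefkey k
      have h10 : (α / s) ^ L * β = s := by
        have hsl : (0:ℝ) < s ^ L := pow_pos hs0 L
        rw [div_pow, div_mul_eq_mul_div, ← hspow, pow_succ, mul_comm (s ^ L) s,
          mul_div_assoc, div_self hsl.ne', mul_one]
      have h7 : s * w (i, ℓ) ≤ (α / s) ^ L * (B *ᵥ u') i := by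
        have h8 : (α / s) ^ L * (β * u' i) ≤ (α / s) ^ L * (B *ᵥ u') i :=
          mul_le_mul_of_nonneg_left (hsubB i) (by positivity)
        have h9 : s * w (i, ℓ) = (α / s) ^ L * (β * u' i) := by
          have hw : w (i, ℓ) = u' i := by
            rw [hwdef]; dsimp only; rw [hc0, pow_zero, inv_one, one_mul]
          rw [hw, ← mul_assoc, h10]
        linarith
      linarith
    · obtain ⟨d, hdval⟩ : ∃ d, (ℓ : ℕ) = d + 1 := ⟨(ℓ : ℕ) - 1, hcs⟩
      have hd : d < L + 1 := by
        have := ℓ.isLt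
        omega
      rw [delay_mulVec_succ' A w i ℓ hdval hd]
      apply le_of_eq
      rw [hwdef]; dsimp only; rw [hdval, pow_succ]
      field_simp
  have hfin : s ≤ α :=
    le_specRad_of_subinvariant (delayBlock A) (delayBlock_nonneg A hA) hwn hw0 hs0.le hsubA
  exact absurd hfin (not_le.mpr hαs)
end

section
/- Let S be a finite family of entrywise nonnegative matrices in ℝ^{n×n} and μ : S → [0,1] with ∑_{A∈S} μ(A) = 1. If the spectral radius of the expectation matrix satisfies ρ(E_μ[S]) < 1, where E_μ[S] = ∑_{A∈S} μ(A) A, then there exist constants C > 0 and β > 0 such that for all k ≥ 1 and all y ∈ ℝ^n, ∑_{w ∈ S^k} (∏_{m=1}^k μ(w_m)) ‖A_{w_k} ⋯ A_{w_1} y‖_∞ ≤ C e^{−βk} ‖y‖_∞. -/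
open Matrix BigOperators

/-- Ordered matrix product `A (w (k-1)) * ⋯ * A (w 0)` along a word `w`
(i.e. `A_{w_k} ⋯ A_{w_1}` with 1-based indexing). -/
def wordProd {n k : ℕ} {ι : Type*} (A : ι → Matrix (Fin n) (Fin n) ℝ)
    (w : Fin k → ι) : Matrix (Fin n) (Fin n) ℝ :=
  ((List.ofFn fun m => A (w m)).reverse).prod

/-! Averaging the word products `A_w` with weights `μ_w = ∏ μ (w m)` gives `M ^ k` for the mean
matrix `M = ∑ μ f • A f`. For a nonnegative matrix `P`, `‖P y‖∞ ≤ (∑ᵢⱼ Pᵢⱼ) ‖y‖∞`, and unlike the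
norm the entry sum is linear in `P`; so the left-hand side is at most
`(∑ᵢⱼ (M ^ k)ᵢⱼ) ‖y‖∞ ≤ n ‖M ^ k‖ ‖y‖∞`. Finally `ρ(M) < 1` and Gelfand's formula give
`‖M ^ k‖ ≤ C r ^ k` with `r < 1`, i.e. `β = -log r`. -/

open scoped ENNReal NNReal
open Filter Asymptotics

attribute [local instance] Matrix.linftyOpSeminormedAddCommGroup Matrix.linftyOpNormedRing
  Matrix.linftyOpNormedAlgebra

lemma spectralRadius_ne_top {𝕜 A : Type*} [NormedField 𝕜] [NormedRing A] [NormedAlgebra 𝕜 A]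
    [CompleteSpace A] (a : A) : spectralRadius 𝕜 a ≠ ⊤ := by
  have h := spectrum.spectralRadius_le_pow_nnnorm_pow_one_div 𝕜 a 0
  norm_num at h
  exact ne_top_of_le_ne_top (by finiteness) h

/-- By Gelfand's formula `‖a ^ k‖ ^ (1 / k) → ρ(a)`, so `‖a ^ k‖ ≤ r ^ k` for any `r > ρ(a)` and
all large `k`; the finitely many remaining `k` are absorbed in the constant. -/
theorem exists_norm_pow_le_geometric_of_spectralRadius_lt_one {A : Type*} [NormedRing A]
    [NormedAlgebra ℂ A] [CompleteSpace A] (a : A) (h : spectralRadius ℂ a < 1) :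
    ∃ r : ℝ, 0 < r ∧ r < 1 ∧ ∃ C > 0, ∀ k : ℕ, ‖a ^ k‖ ≤ C * r ^ k := by
  obtain ⟨r, hρr, hr1⟩ := ENNReal.lt_iff_exists_nnreal_btwn.1 h
  have hr0 : 0 < r := ENNReal.coe_pos.1 (pos_of_gt hρr)
  have hev : ∀ᶠ k : ℕ in atTop, ‖a ^ k‖ ≤ 1 * ‖(r : ℝ) ^ k‖ := by
    filter_upwards [(spectrum.gelfand_formula a).eventually_lt_const hρr, eventually_gt_atTop 0]
      with k hk hk0
    rw [one_div, ENNReal.rpow_inv_lt_iff (by positivity), ENNReal.rpow_natCast] at hk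
    simpa using (show (‖a ^ k‖₊ : ℝ) ≤ r ^ k by exact_mod_cast hk.le)
  obtain ⟨C, hC, hbound⟩ := bound_of_isBigO_nat_atTop (isBigO_iff.2 ⟨1, hev⟩)
  exact ⟨r, hr0, by exact_mod_cast hr1, C, hC, fun k => by
    simpa using hbound (pow_ne_zero k (NNReal.coe_ne_zero.2 hr0.ne'))⟩

namespace Matrix

variable {m n : Type*} [Fintype m] [Fintype n]

lemma sum_norm_row_le_linfty_opNorm {α : Type*} [SeminormedAddCommGroup α] (P : Matrix m n α)
    (i : m) : ∑ j, ‖P i j‖ ≤ ‖P‖ := by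
  rw [linfty_opNorm_def]
  simpa using NNReal.coe_le_coe.2
    (Finset.le_sup (f := fun i => ∑ j, ‖P i j‖₊) (Finset.mem_univ i))

lemma linfty_opNorm_le_sum_norm {α : Type*} [SeminormedAddCommGroup α] (P : Matrix m n α) :
    ‖P‖ ≤ ∑ i, ∑ j, ‖P i j‖ := by
  rw [linfty_opNorm_def]
  simpa using NNReal.coe_le_coe.2 (Finset.sup_le fun i _ =>
    Finset.single_le_sum (f := fun i => ∑ j, ‖P i j‖₊) (fun _ _ => zero_le) (Finset.mem_univ i))

lemma linfty_opNorm_map_algebraMap (P : Matrix m n ℝ) : ‖P.map (algebraMap ℝ ℂ)‖ = ‖P‖ := by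
  simp [linfty_opNorm_def]

lemma sum_entries_le_card_mul_linfty_opNorm (P : Matrix m n ℝ) :
    ∑ i, ∑ j, P i j ≤ Fintype.card m * ‖P‖ :=
  calc ∑ i, ∑ j, P i j ≤ ∑ i, ∑ j, ‖P i j‖ :=
        Finset.sum_le_sum fun i _ => Finset.sum_le_sum fun j _ => Real.le_norm_self _
    _ ≤ ∑ _i : m, ‖P‖ := Finset.sum_le_sum fun i _ => sum_norm_row_le_linfty_opNorm P i
    _ = Fintype.card m * ‖P‖ := by simp

lemma norm_mulVec_le_sum_entries_mul_norm (P : Matrix m n ℝ) (hP : ∀ i j, 0 ≤ P i j)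
    (y : n → ℝ) : ‖P *ᵥ y‖ ≤ (∑ i, ∑ j, P i j) * ‖y‖ :=
  (linfty_opNorm_mulVec P y).trans <| by
    gcongr
    simpa [abs_of_nonneg (hP _ _)] using linfty_opNorm_le_sum_norm P

lemma list_prod_nonneg [DecidableEq m] (l : List (Matrix m m ℝ))
    (hl : ∀ B ∈ l, ∀ i j, 0 ≤ B i j) (i j : m) : 0 ≤ l.prod i j := by
  refine List.prod_induction (fun B : Matrix m m ℝ => ∀ i j, 0 ≤ B i j) (fun B C hB hC i j => ?_)
    (fun i j => ?_) hl i j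
  · exact Finset.sum_nonneg fun k _ => mul_nonneg (hB i k) (hC k j)
  · rw [one_apply]
    split_ifs <;> norm_num

theorem exists_norm_pow_le_geometric_of_specRad_lt_one [DecidableEq m] (M : Matrix m m ℝ)
    (h : specRad M < 1) : ∃ r : ℝ, 0 < r ∧ r < 1 ∧ ∃ C > 0, ∀ k : ℕ, ‖M ^ k‖ ≤ C * r ^ k := by
  have hρ : spectralRadius ℂ (M.map (algebraMap ℝ ℂ)) < 1 := by
    rwa [specRad, ← ENNReal.toReal_one,
      ENNReal.toReal_lt_toReal (spectralRadius_ne_top _) ENNReal.one_ne_top] at h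
  obtain ⟨r, hr0, hr1, C, hC, hpow⟩ := exists_norm_pow_le_geometric_of_spectralRadius_lt_one _ hρ
  refine ⟨r, hr0, hr1, C, hC, fun k => ?_⟩
  rw [← linfty_opNorm_map_algebraMap, ← RingHom.mapMatrix_apply, map_pow]
  exact hpow k

end Matrix

section Words

variable {n : ℕ} {ι : Type*}

lemma wordProd_snoc {k : ℕ} (A : ι → Matrix (Fin n) (Fin n) ℝ) (w : Fin k → ι) (f : ι) :
    wordProd A (Fin.snoc w f) = A f * wordProd A w := by
  rw [wordProd, List.ofFn_succ']
  simp [wordProd, Fin.snoc_castSucc, Fin.snoc_last]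

lemma wordProd_nonneg {k : ℕ} (A : ι → Matrix (Fin n) (Fin n) ℝ) (hA : ∀ f i j, 0 ≤ A f i j)
    (w : Fin k → ι) (i j : Fin n) : 0 ≤ wordProd A w i j := by
  refine Matrix.list_prod_nonneg _ (fun B hB => ?_) i j
  obtain ⟨m, rfl⟩ := List.mem_ofFn.1 (List.mem_reverse.1 hB)
  exact hA (w m)

lemma sum_prod_smul_wordProd [Fintype ι] (A : ι → Matrix (Fin n) (Fin n) ℝ) (μ : ι → ℝ) (k : ℕ) :
    ∑ w : Fin k → ι, (∏ m, μ (w m)) • wordProd A w = (∑ f, μ f • A f) ^ k := by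
  induction k with
  | zero => simp [wordProd]
  | succ k ih =>
    rw [pow_succ', ← ih, Finset.sum_mul_sum,
      ← (Fin.snocEquiv fun _ => ι).sum_comp, Fintype.sum_prod_type]
    refine Finset.sum_congr rfl fun f _ => Finset.sum_congr rfl fun w _ => ?_
    simp only [Fin.snocEquiv, Equiv.coe_fn_mk, Fin.prod_univ_castSucc, Fin.snoc_castSucc,
      Fin.snoc_last, wordProd_snoc]
    rw [smul_mul_smul_comm, mul_comm]

lemma sum_prod_mul_sum_entries_wordProd [Fintype ι] (A : ι → Matrix (Fin n) (Fin n) ℝ)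
    (μ : ι → ℝ) (k : ℕ) :
    ∑ w : Fin k → ι, (∏ m, μ (w m)) * ∑ i, ∑ j, wordProd A w i j =
      ∑ i, ∑ j, ((∑ f, μ f • A f) ^ k) i j := by
  simp only [← sum_prod_smul_wordProd, Matrix.sum_apply, Matrix.smul_apply, smul_eq_mul,
    Finset.mul_sum]
  rw [Finset.sum_comm]
  exact Finset.sum_congr rfl fun i _ => Finset.sum_comm

end Words

theorem stmt10_general {n : ℕ} {ι : Type*} [Fintype ι]
    (A : ι → Matrix (Fin n) (Fin n) ℝ) (hA : ∀ f i j, 0 ≤ A f i j)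
    (μ : ι → ℝ) (hμ0 : ∀ f, 0 ≤ μ f)
    (hρ : specRad (∑ f, μ f • A f) < 1) :
    ∃ C > (0 : ℝ), ∃ β > (0 : ℝ), ∀ k : ℕ, 1 ≤ k → ∀ y : Fin n → ℝ,
      ∑ w : Fin k → ι, (∏ m, μ (w m)) * ‖wordProd A w *ᵥ y‖ ≤
        C * Real.exp (-β * k) * ‖y‖ := by
  obtain ⟨r, hr0, hr1, C, hC, hpow⟩ := Matrix.exists_norm_pow_le_geometric_of_specRad_lt_one _ hρ
  refine ⟨(n + 1) * C, by positivity, -Real.log r, by simpa using Real.log_neg hr0 hr1,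
    fun k _ y => ?_⟩
  have hexp : Real.exp (-(-Real.log r) * k) = r ^ k := by
    rw [neg_neg, mul_comm, Real.exp_nat_mul, Real.exp_log hr0]
  calc ∑ w : Fin k → ι, (∏ m, μ (w m)) * ‖wordProd A w *ᵥ y‖
      ≤ ∑ w : Fin k → ι, (∏ m, μ (w m)) * ((∑ i, ∑ j, wordProd A w i j) * ‖y‖) := by
        gcongr with w
        · exact Finset.prod_nonneg fun m _ => hμ0 (w m)
        · exact Matrix.norm_mulVec_le_sum_entries_mul_norm _ (wordProd_nonneg A hA w) y
    _ = (∑ i, ∑ j, ((∑ f, μ f • A f) ^ k) i j) * ‖y‖ := by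
        simp only [← mul_assoc, ← Finset.sum_mul, sum_prod_mul_sum_entries_wordProd]
    _ ≤ n * ‖(∑ f, μ f • A f) ^ k‖ * ‖y‖ := by
        gcongr
        simpa using Matrix.sum_entries_le_card_mul_linfty_opNorm ((∑ f, μ f • A f) ^ k)
    _ ≤ (n + 1) * C * Real.exp (-(-Real.log r) * k) * ‖y‖ := by
        rw [hexp, mul_assoc _ C]
        gcongr
        · linarith
        · exact hpow k

theorem stmt10 {n : ℕ} {ι : Type*} [Fintype ι]
    (A : ι → Matrix (Fin n) (Fin n) ℝ) (hA : ∀ f i j, 0 ≤ A f i j)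
    (μ : ι → ℝ) (hμ0 : ∀ f, 0 ≤ μ f) (hμ1 : ∑ f, μ f = 1)
    (hρ : specRad (∑ f, μ f • A f) < 1) :
    ∃ C > (0 : ℝ), ∃ β > (0 : ℝ), ∀ k : ℕ, 1 ≤ k → ∀ y : Fin n → ℝ,
      ∑ w : Fin k → ι, (∏ m, μ (w m)) * ‖wordProd A w *ᵥ y‖ ≤
        C * Real.exp (-β * k) * ‖y‖ :=
  stmt10_general A hA μ hμ0 hρ
end
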